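/- Let q₁, q₂, q be positive integers with q → ∞ and max{q₁,q₂} = o(q²). Then the number of pairs (a,b) of integers with a ∈ [q₁, q₁+q], b ∈ [q₂, q₂+q] and gcd(a,b) = 1 equals q²(6/π² + o(1)) as q → ∞. -/

import Mathlib

open Filter Finset ArithmeticFunction
open scoped ArithmeticFunction.Moebius

/-!
Möbius inversion turns the indicator of `gcd a b = 1` into `∑_{d ∣ a, d ∣ b} μ d`, so the number
of coprime pairs in the square is `∑_{d ≤ N} μ d · A_d · B_d`, where `A_d`, `B_d` count the
multiples of `d` in the two intervals and `N = q₁ + q` bounds every element of the first one.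
Each of `A_d`, `B_d` is `q / d + O(1)`, so after dividing by `q²` the error is
`O(q⁻¹ ∑_{d ≤ N} 1/d + N / q²) = O(√(N / q²) + N / q²)`, which tends to `0` because `N = o(q²)`;
the main term `∑_{d ≤ N} μ d / d²` tends to `1 / ζ(2) = 6 / π²`.
-/

theorem sum_divisors_moebius {R : Type*} [Ring R] (n : ℕ) :
    ∑ d ∈ n.divisors, (μ d : R) = if n = 1 then 1 else 0 := by
  have h := congrArg (fun f : ArithmeticFunction R => f n) (coe_moebius_mul_coe_zeta (R := R))
  simpa only [coe_mul_zeta_apply, one_apply, intCoe_apply] using h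

theorem sum_Icc_moebius_ite_dvd_eq_ite_gcd_eq_one {R : Type*} [Ring R] {a b M : ℕ} (ha : 0 < a)
    (haM : a ≤ M) :
    ∑ d ∈ Icc 1 M, (if d ∣ a ∧ d ∣ b then (μ d : R) else 0) =
      if Nat.gcd a b = 1 then 1 else 0 := by
  have hdiv : {d ∈ Icc 1 M | d ∣ a ∧ d ∣ b} = (Nat.gcd a b).divisors := by
    ext d
    simp only [mem_filter, mem_Icc, Nat.mem_divisors, Nat.dvd_gcd_iff,
      Nat.gcd_ne_zero_left ha.ne', ne_eq, not_false_eq_true, and_true]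
    constructor
    · exact And.right
    · rintro ⟨hda, hdb⟩
      exact ⟨⟨Nat.pos_of_dvd_of_pos hda ha, (Nat.le_of_dvd ha hda).trans haM⟩, hda, hdb⟩
  rw [← sum_filter, hdiv, sum_divisors_moebius]

theorem card_filter_gcd_eq_one_eq_sum_moebius {R : Type*} [CommRing R] (s t : Finset ℕ) (M : ℕ)
    (hs : ∀ a ∈ s, 0 < a ∧ a ≤ M) :
    (#{p ∈ s ×ˢ t | Nat.gcd p.1 p.2 = 1} : R) =
      ∑ d ∈ Icc 1 M, (μ d : R) * #{a ∈ s | d ∣ a} * #{b ∈ t | d ∣ b} := by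
  calc (#{p ∈ s ×ˢ t | Nat.gcd p.1 p.2 = 1} : R)
      = ∑ p ∈ s ×ˢ t, ∑ d ∈ Icc 1 M, if d ∣ p.1 ∧ d ∣ p.2 then (μ d : R) else 0 := by
        rw [card_filter, Nat.cast_sum]
        refine sum_congr rfl fun p hp => ?_
        obtain ⟨ha, haM⟩ := hs p.1 (mem_product.1 hp).1
        rw [sum_Icc_moebius_ite_dvd_eq_ite_gcd_eq_one ha haM]
        split_ifs <;> simp
    _ = ∑ d ∈ Icc 1 M, (μ d : R) * #{a ∈ s | d ∣ a} * #{b ∈ t | d ∣ b} := by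
        rw [sum_comm]
        refine sum_congr rfl fun d _ => ?_
        rw [← sum_filter, sum_const, filter_product, card_product, nsmul_eq_mul]
        push_cast
        ring

theorem abs_card_filter_dvd_Ico_sub_lt {a b d : ℕ} (hab : a ≤ b) (hd : 0 < d) :
    |(#{n ∈ Ico a b | d ∣ n} : ℝ) - ((b : ℝ) - a) / d| < 1 := by
  have hcard := Nat.Ico_filter_modEq_card a b hd 0
  simp only [Nat.modEq_zero_iff_dvd, Nat.cast_zero, sub_zero] at hcard
  have hmono : ⌈(a : ℚ) / d⌉ ≤ ⌈(b : ℚ) / d⌉ := Int.ceil_mono (by gcongr)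
  rw [max_eq_left (sub_nonneg.2 hmono)] at hcard
  have hceil : |((⌈(b : ℚ) / d⌉ - ⌈(a : ℚ) / d⌉ : ℤ) : ℚ) - ((b : ℚ) - a) / d| < 1 := by
    have := Int.le_ceil ((a : ℚ) / d)
    have := Int.le_ceil ((b : ℚ) / d)
    have := Int.ceil_lt_add_one ((a : ℚ) / d)
    have := Int.ceil_lt_add_one ((b : ℚ) / d)
    rw [abs_lt, sub_div]
    push_cast
    constructor <;> linarith
  rw [← hcard] at hceil
  have hR : ((|(#{n ∈ Ico a b | d ∣ n} : ℚ) - ((b : ℚ) - a) / d| : ℚ) : ℝ) < 1 := by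
    exact_mod_cast hceil
  push_cast at hR
  exact hR

theorem abs_card_filter_dvd_Icc_sub_le (x q : ℕ) {d : ℕ} (hd : 0 < d) :
    |(#{n ∈ Icc x (x + q) | d ∣ n} : ℝ) - q / d| ≤ 2 := by
  have h := abs_card_filter_dvd_Ico_sub_lt (Nat.le_add_right x (q + 1)) hd
  rw [← add_assoc, Finset.Ico_add_one_right_eq_Icc] at h
  have hd1 : (1 : ℝ) / d ≤ 1 := div_le_one_of_le₀ (by exact_mod_cast hd) (Nat.cast_nonneg d)
  calc |(#{n ∈ Icc x (x + q) | d ∣ n} : ℝ) - q / d|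
      = |((#{n ∈ Icc x (x + q) | d ∣ n} : ℝ) - ((x + q + 1 : ℕ) - x) / d) + 1 / d| := by
        congr 1; push_cast; ring
    _ ≤ 1 + 1 := by
        refine (abs_add_le _ _).trans (add_le_add h.le ?_)
        rwa [abs_of_nonneg (by positivity)]
    _ = 2 := by norm_num

theorem abs_mul_sub_sq_le {A B c e : ℝ} (hA : |A - c| ≤ e) (hB : |B - c| ≤ e) :
    |A * B - c ^ 2| ≤ 2 * e * |c| + e ^ 2 := by
  have he : 0 ≤ e := (abs_nonneg _).trans hA
  calc |A * B - c ^ 2| = |(A - c) * (B - c) + c * (A - c) + c * (B - c)| := by congr 1; ring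
    _ ≤ |A - c| * |B - c| + |c| * |A - c| + |c| * |B - c| := by
        simpa only [abs_mul] using abs_add_three ((A - c) * (B - c)) (c * (A - c)) (c * (B - c))
    _ ≤ e * e + |c| * e + |c| * e := by gcongr
    _ = 2 * e * |c| + e ^ 2 := by ring

theorem sum_Icc_inv_le_two_mul_sqrt (N : ℕ) : ∑ d ∈ Icc 1 N, (d : ℝ)⁻¹ ≤ 2 * √N := by
  rcases N.eq_zero_or_pos with rfl | hN
  · simp
  have hharm : ∑ d ∈ Icc 1 N, (d : ℝ)⁻¹ = harmonic N := by
    simp only [harmonic_eq_sum_Icc, Rat.cast_sum, Rat.cast_inv, Rat.cast_natCast]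
  have hsqrt : 0 < √(N : ℝ) := Real.sqrt_pos.2 (by exact_mod_cast hN)
  have hlog : Real.log N ≤ 2 * (√N - 1) := by
    rw [← Real.sq_sqrt (Nat.cast_nonneg N), Real.log_pow, Real.sqrt_sq hsqrt.le]
    push_cast
    gcongr
    exact Real.log_le_sub_one_of_pos hsqrt
  linarith [harmonic_le_one_add_log N]

theorem abs_card_filter_dvd_mul_div_sq_sub_le (x y : ℕ) {q d : ℕ} (hq : 0 < q) (hd : 0 < d) :
    |(#{a ∈ Icc x (x + q) | d ∣ a} : ℝ) * #{b ∈ Icc y (y + q) | d ∣ b} / q ^ 2 - 1 / d ^ 2| ≤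
      4 / ((q : ℝ) * d) + 4 / (q : ℝ) ^ 2 := by
  have hprod := abs_mul_sub_sq_le (abs_card_filter_dvd_Icc_sub_le x q hd)
    (abs_card_filter_dvd_Icc_sub_le y q hd)
  have hq' : (0 : ℝ) < q := by exact_mod_cast hq
  have hd' : (0 : ℝ) < d := by exact_mod_cast hd
  rw [abs_of_nonneg (by positivity : (0 : ℝ) ≤ q / d)] at hprod
  generalize ((#{a ∈ Icc x (x + q) | d ∣ a} : ℕ) : ℝ) = A at hprod ⊢
  generalize ((#{b ∈ Icc y (y + q) | d ∣ b} : ℕ) : ℝ) = B at hprod ⊢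
  calc |A * B / q ^ 2 - 1 / d ^ 2| = |A * B - (q / d) ^ 2| / q ^ 2 := by
        have hsplit : A * B / q ^ 2 - 1 / d ^ 2 = (A * B - (q / d) ^ 2) / q ^ 2 := by
          field_simp
        rw [hsplit, abs_div, abs_of_pos (by positivity : (0 : ℝ) < q ^ 2)]
    _ ≤ (2 * 2 * (q / d) + 2 ^ 2) / q ^ 2 := by gcongr
    _ = 4 / (q * d) + 4 / q ^ 2 := by field_simp; ring

theorem abs_card_coprime_div_sq_sub_sum_moebius_le {x y q : ℕ} (hx : 0 < x) (hq : 0 < q) :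
    |(#{p ∈ Icc x (x + q) ×ˢ Icc y (y + q) | Nat.gcd p.1 p.2 = 1} : ℝ) / q ^ 2
        - ∑ d ∈ Icc 1 (x + q), (μ d : ℝ) / d ^ 2|
      ≤ 8 * √((x + q : ℕ) / (q : ℝ) ^ 2) + 4 * ((x + q : ℕ) / (q : ℝ) ^ 2) := by
  set N := x + q
  have hq' : (0 : ℝ) < q := by exact_mod_cast hq
  rw [card_filter_gcd_eq_one_eq_sum_moebius _ _ N fun a ha => by
      simp only [mem_Icc] at ha; omega,
    sum_div, ← sum_sub_distrib]
  calc _ ≤ ∑ d ∈ Icc 1 N, (4 / (q * d) + 4 / (q : ℝ) ^ 2) := by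
        refine (abs_sum_le_sum_abs _ _).trans (sum_le_sum fun d hd => ?_)
        have hd : 0 < d := (mem_Icc.1 hd).1
        calc _ = |(μ d : ℝ)| * |(#{a ∈ Icc x N | d ∣ a} : ℝ) * #{b ∈ Icc y (y + q) | d ∣ b}
                / q ^ 2 - 1 / d ^ 2| := by
              rw [← abs_mul]; congr 1; ring
          _ ≤ 1 * (4 / ((q : ℝ) * d) + 4 / (q : ℝ) ^ 2) := by
              gcongr
              · exact_mod_cast abs_moebius_le_one
              · exact abs_card_filter_dvd_mul_div_sq_sub_le x y hq hd
          _ = _ := one_mul _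
    _ = 4 / q * ∑ d ∈ Icc 1 N, (d : ℝ)⁻¹ + 4 * (N / (q : ℝ) ^ 2) := by
        rw [sum_add_distrib, mul_sum, sum_const, Nat.card_Icc, nsmul_eq_mul,
          Nat.add_sub_cancel]
        congr 1
        · exact sum_congr rfl fun d _ => by ring
        · ring
    _ ≤ 4 / q * (2 * √N) + 4 * (N / (q : ℝ) ^ 2) := by
        gcongr
        exact sum_Icc_inv_le_two_mul_sqrt N
    _ = 8 * √(N / (q : ℝ) ^ 2) + 4 * (N / (q : ℝ) ^ 2) := by
        rw [Real.sqrt_div' _ (by positivity), Real.sqrt_sq hq'.le]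
        ring

theorem hasSum_moebius_div_sq : HasSum (fun d : ℕ => (μ d : ℝ) / d ^ 2) (6 / Real.pi ^ 2) := by
  have hs : 1 < (2 : ℂ).re := by norm_num
  have hL : LSeries (fun n => (μ n : ℂ)) 2 = 6 / (Real.pi : ℂ) ^ 2 := by
    have h := LSeries_zeta_mul_Lseries_moebius hs
    rw [LSeries_zeta_eq_riemannZeta hs, riemannZeta_two] at h
    rw [eq_div_iff (by exact_mod_cast pow_ne_zero 2 Real.pi_ne_zero)]
    linear_combination (6 : ℂ) * h
  have hterm : ∀ n : ℕ,
      LSeries.term (fun n => (μ n : ℂ)) 2 n = (((μ n : ℝ) / n ^ 2 : ℝ) : ℂ) := by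
    intro n
    rcases eq_or_ne n 0 with rfl | hn
    · simp
    · rw [LSeries.term_of_ne_zero hn, ← Nat.cast_ofNat, Complex.cpow_natCast]
      norm_cast
  have h := (LSeriesSummable_moebius_iff.2 hs).LSeriesHasSum
  rw [LSeriesHasSum, hL, funext hterm] at h
  exact_mod_cast h

theorem tendsto_sum_Icc_moebius_div_sq :
    Tendsto (fun N => ∑ d ∈ Icc 1 N, (μ d : ℝ) / d ^ 2) atTop (nhds (6 / Real.pi ^ 2)) := by
  refine ((tendsto_add_atTop_iff_nat 1).2 hasSum_moebius_div_sq.tendsto_sum_nat).congr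
    fun N => ?_
  rw [range_eq_Ico, sum_eq_sum_Ico_succ_bot N.succ_pos, Nat.succ_eq_add_one,
    Finset.Ico_add_one_right_eq_Icc]
  simp

theorem stmt1_general (q₁ q₂ : ℕ → ℕ) (hpos₁ : ∀ q, 0 < q₁ q)
    (ho : (fun q : ℕ => (max (q₁ q) (q₂ q) : ℝ)) =o[atTop] fun q : ℕ => (q : ℝ) ^ 2) :
    Tendsto (fun q : ℕ =>
      (((Finset.Icc (q₁ q) (q₁ q + q) ×ˢ Finset.Icc (q₂ q) (q₂ q + q)).filter
          (fun ab : ℕ × ℕ => Nat.gcd ab.1 ab.2 = 1)).card : ℝ) / (q : ℝ) ^ 2)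
      atTop (nhds (6 / Real.pi ^ 2)) := by
  have hq₁ : (fun q : ℕ => (q₁ q : ℝ)) =o[atTop] fun q : ℕ => (q : ℝ) ^ 2 :=
    (Asymptotics.isBigO_of_le _ fun q => by
      simpa using (le_max_left (q₁ q : ℝ) (q₂ q)).trans (le_abs_self _)).trans_isLittleO ho
  have hself : (fun q : ℕ => (q : ℝ)) =o[atTop] fun q : ℕ => (q : ℝ) ^ 2 := by
    simpa only [Function.comp_def, pow_one] using
      (Asymptotics.isLittleO_pow_pow_atTop_of_lt one_lt_two).comp_tendsto
        tendsto_natCast_atTop_atTop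
  have hN : Tendsto (fun q : ℕ => ((q₁ q + q : ℕ) : ℝ) / (q : ℝ) ^ 2) atTop (nhds 0) := by
    simpa using (hq₁.add hself).tendsto_div_nhds_zero
  have herr : Tendsto (fun q : ℕ => 8 * √((q₁ q + q : ℕ) / (q : ℝ) ^ 2)
      + 4 * ((q₁ q + q : ℕ) / (q : ℝ) ^ 2)) atTop (nhds 0) := by
    simpa using (hN.sqrt.const_mul 8).add (hN.const_mul 4)
  have hsum := tendsto_sum_Icc_moebius_div_sq.comp
    (tendsto_atTop_mono (fun q => Nat.le_add_left q (q₁ q)) tendsto_id)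
  have hbound := (eventually_gt_atTop 0).mono fun q hq0 =>
    abs_card_coprime_div_sq_sub_sum_moebius_le (y := q₂ q) (hpos₁ q) hq0
  simpa using hsum.add (squeeze_zero_norm' hbound herr)

/-- For shifts q₁(q), q₂(q) with max{q₁,q₂} = o(q²), the number of coprime pairs
in [q₁,q₁+q] × [q₂,q₂+q] equals q²(6/π² + o(1)). -/
theorem stmt1 (q₁ q₂ : ℕ → ℕ) (hpos₁ : ∀ q, 0 < q₁ q) (hpos₂ : ∀ q, 0 < q₂ q)
    (ho : (fun q : ℕ => (max (q₁ q) (q₂ q) : ℝ)) =o[atTop] fun q : ℕ => (q : ℝ) ^ 2) :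
    Tendsto (fun q : ℕ =>
      (((Finset.Icc (q₁ q) (q₁ q + q) ×ˢ Finset.Icc (q₂ q) (q₂ q + q)).filter
          (fun ab : ℕ × ℕ => Nat.gcd ab.1 ab.2 = 1)).card : ℝ) / (q : ℝ) ^ 2)
      atTop (nhds (6 / Real.pi ^ 2)) :=
  stmt1_general q₁ q₂ hpos₁ ho
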